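/- arXiv:1804.06757 — 7 statements merged into one kernel-verified Lean document; each statement's English description precedes it below -/
import Mathlib

section
/- If X is a totally bounded metric space, then the set of Lipschitz real-valued functions on X is uniformly dense in the set of uniformly continuous real-valued functions on X: for every uniformly continuous f : X → ℝ and every ε > 0 there exists a Lipschitz function g : X → ℝ with |f(x) - g(x)| ≤ ε for all x ∈ X. -/
/-!
A uniformly continuous function on a totally bounded space is bounded, and a bounded uniformly
continuous function `f` is approximated from below by its Pasch–Hausdorff envelope
`x ↦ inf_y (f y + K d(x, y))`, which is `K`-Lipschitz. If `f` oscillates by at most `K δ` and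
varies by less than `ε` on `δ`-balls, the points `y` far from `x` cannot push the infimum below
`f x`, and the points near `x` cannot push it below `f x - ε`.
-/

open Set NNReal

section InfConv

variable {X : Type*} [PseudoMetricSpace X] {f : X → ℝ}

noncomputable def infConv (f : X → ℝ) (K : ℝ≥0) (x : X) : ℝ :=
  ⨅ y, f y + K * dist x y

theorem bddBelow_range_add_mul_dist (hf : BddBelow (range f)) (K : ℝ≥0) (x : X) :
    BddBelow (range fun y => f y + K * dist x y) := by
  obtain ⟨m, hm⟩ := hf
  refine ⟨m, ?_⟩
  rintro _ ⟨y, rfl⟩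
  have hmy : m ≤ f y := hm (mem_range_self y)
  have hdist : 0 ≤ (K : ℝ) * dist x y := by positivity
  linarith

theorem infConv_le (hf : BddBelow (range f)) (K : ℝ≥0) (x : X) : infConv f K x ≤ f x := by
  simpa [infConv] using ciInf_le (bddBelow_range_add_mul_dist hf K x) x

theorem lipschitzWith_infConv (hf : BddBelow (range f)) (K : ℝ≥0) :
    LipschitzWith K (infConv f K) := by
  refine LipschitzWith.of_le_add_mul K fun x x' => ?_
  have : Nonempty X := ⟨x⟩
  rw [← sub_le_iff_le_add]
  refine le_ciInf fun y => ?_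
  rw [sub_le_iff_le_add]
  calc infConv f K x ≤ f y + K * dist x y := ciInf_le (bddBelow_range_add_mul_dist hf K x) y
    _ ≤ f y + K * dist x' y + K * dist x x' := by
      rw [add_assoc, ← mul_add, add_comm (dist x' y)]
      gcongr
      exact dist_triangle x x' y

theorem sub_le_infConv {K : ℝ≥0} {ε δ : ℝ} (hε : 0 ≤ ε)
    (hnear : ∀ ⦃y z⦄, dist y z < δ → dist (f y) (f z) < ε) (hosc : ∀ y z, f y - f z ≤ K * δ)
    (x : X) : f x - ε ≤ infConv f K x := by
  have : Nonempty X := ⟨x⟩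
  refine le_ciInf fun y => ?_
  rcases lt_or_ge (dist x y) δ with hxy | hxy
  · have hdiff : |f x - f y| < ε := hnear hxy
    have hdist : 0 ≤ (K : ℝ) * dist x y := by positivity
    linarith [le_abs_self (f x - f y)]
  · have hfar : (K : ℝ) * δ ≤ K * dist x y := by gcongr
    linarith [hosc x y]

end InfConv

theorem exists_lipschitzWith_abs_sub_le_of_uniformContinuous {X : Type*} [PseudoMetricSpace X]
    {f : X → ℝ} (hf : UniformContinuous f) (hbdd : Bornology.IsBounded (range f))
    {ε : ℝ} (hε : 0 < ε) : ∃ (K : ℝ≥0) (g : X → ℝ), LipschitzWith K g ∧ ∀ x, |f x - g x| ≤ ε := by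
  obtain ⟨δ, hδ, hnear⟩ := Metric.uniformContinuous_iff.mp hf ε hε
  obtain ⟨D, hD⟩ := Metric.isBounded_iff.mp hbdd
  set K := (D / δ).toNNReal
  have hosc : ∀ y z, f y - f z ≤ K * δ := fun y z => calc
    f y - f z ≤ D := (le_abs_self _).trans (hD (mem_range_self y) (mem_range_self z))
    _ = D / δ * δ := by field_simp
    _ ≤ K * δ := by gcongr; exact Real.le_coe_toNNReal _
  refine ⟨K, infConv f K, lipschitzWith_infConv hbdd.bddBelow K, fun x => abs_le.mpr ⟨?_, ?_⟩⟩
  · linarith [infConv_le hbdd.bddBelow K x]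
  · linarith [sub_le_infConv hε.le hnear hosc x]

theorem stmt_2 {X : Type*} [MetricSpace X]
    (htb : TotallyBounded (Set.univ : Set X))
    (f : X → ℝ) (hf : UniformContinuous f)
    (ε : ℝ) (hε : 0 < ε) :
    ∃ g : X → ℝ, ∃ σ : ℝ, 0 ≤ σ ∧ (∀ x y, |g x - g y| ≤ σ * dist x y) ∧
      ∀ x, |f x - g x| ≤ ε := by
  have hbdd : Bornology.IsBounded (range f) := by
    simpa only [image_univ] using (htb.image hf).isBounded
  obtain ⟨K, g, hg, hfg⟩ := exists_lipschitzWith_abs_sub_le_of_uniformContinuous hf hbdd hε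
  exact ⟨g, K, K.2, fun x y => by simpa only [Real.dist_eq] using hg.dist_le_mul x y, hfg⟩
end

section
/- If (X, A) is a McShane-Whitney pair, then A is a located subset of X: for every x ∈ X, the infimum d(x, A) := inf{d(x,a) : a ∈ A} exists. In fact, d(x,A) = (1/σ)(*r̄(x) - r) where *r̄ is the McShane-Whitney lower extension of the constant function r on A with constant σ. -/
/-- `(X, A)` is a McShane-Whitney pair: for every `σ > 0` and every `σ`-Lipschitz
real-valued function on `A`, the McShane-Whitney supremum and infimum exist at every
point of `X`. -/
def MWPair {X : Type*} [MetricSpace X] (A : Set X) : Prop :=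
  ∀ σ : ℝ, 0 < σ → ∀ g : X → ℝ,
    (∀ a ∈ A, ∀ b ∈ A, |g a - g b| ≤ σ * dist a b) →
    ∀ x : X, (∃ s, IsLUB ((fun a => g a - σ * dist x a) '' A) s) ∧
             (∃ i, IsGLB ((fun a => g a + σ * dist x a) '' A) i)

/-- The McShane-Whitney upper extension `g*`. -/
noncomputable def upperExt {X : Type*} [MetricSpace X] (A : Set X) (σ : ℝ) (g : X → ℝ)
    (x : X) : ℝ :=
  sSup ((fun a => g a - σ * dist x a) '' A)

/-- The McShane-Whitney lower extension `*g`. -/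
noncomputable def lowerExt {X : Type*} [MetricSpace X] (A : Set X) (σ : ℝ) (g : X → ℝ)
    (x : X) : ℝ :=
  sInf ((fun a => g a + σ * dist x a) '' A)

theorem stmt_10 {X : Type*} [MetricSpace X] (A : Set X) (hMW : MWPair A)
    (σ r : ℝ) (hσ : 0 < σ) :
    ∀ x : X, (∃ m, IsGLB ((fun a => dist x a) '' A) m) ∧
      sInf ((fun a => dist x a) '' A) =
        (1 / σ) * (lowerExt A σ (fun _ => r) x - r) := by
  intro x
  obtain ⟨-, i, hi⟩ := hMW σ hσ (fun _ => r)
    (by intro a _ b _; simpa using mul_nonneg hσ.le dist_nonneg) x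
  have hA : A.Nonempty := by
    rcases Set.eq_empty_or_nonempty A with h | h
    · subst h
      simp only [Set.image_empty] at hi
      linarith [hi.2 (by simp : (i + 1) ∈ lowerBounds (∅ : Set ℝ))]
    · exact h
  have hm : IsGLB ((fun a => dist x a) '' A) ((i - r) / σ) := by
    constructor
    · rintro y ⟨a, ha, rfl⟩
      have := hi.1 ⟨a, ha, rfl⟩
      simp only at this
      rw [div_le_iff₀ hσ]
      linarith
    · intro b hb
      have : r + σ * b ≤ i := hi.2 (by
        rintro y ⟨a, ha, rfl⟩
        have := hb ⟨a, ha, rfl⟩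
        simp only
        nlinarith)
      rw [le_div_iff₀ hσ]
      linarith
  refine ⟨⟨_, hm⟩, ?_⟩
  rw [hm.csInf_eq (hA.image _)]
  have : lowerExt A σ (fun _ => r) x = i := hi.csInf_eq (hA.image _)
  rw [this]
  field_simp
end

section
/- Let (X,A) be a McShane-Whitney pair and g ∈ Lip(A, σ). If inf g exists on A, then inf *g exists on X and inf_{x ∈ X} *g(x) = inf_{a ∈ A} g(a); dually, if sup g exists, then sup g* exists and sup_{x∈X} g* = sup_{a∈A} g. -/
theorem stmt_11 {X : Type*} [MetricSpace X] (A : Set X) (hMW : MWPair A)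
    (σ : ℝ) (hσ : 0 < σ) (g : X → ℝ)
    (hg : ∀ a ∈ A, ∀ b ∈ A, |g a - g b| ≤ σ * dist a b) :
    (∀ m : ℝ, IsGLB (g '' A) m → IsGLB (Set.range (lowerExt A σ g)) m) ∧
    (∀ M : ℝ, IsLUB (g '' A) M → IsLUB (Set.range (upperExt A σ g)) M) := by
  constructor
  · intro m hm
    -- A is nonempty
    have hA : A.Nonempty := by
      by_contra h
      rw [Set.not_nonempty_iff_eq_empty] at h
      subst h
      simp only [Set.image_empty] at hm
      have h1 : m + 1 ≤ m := hm.2 (fun y hy => absurd hy (Set.notMem_empty y))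
      linarith
    have key : ∀ x : X, IsGLB ((fun a => g a + σ * dist x a) '' A) (lowerExt A σ g x) := by
      intro x
      obtain ⟨i, hi⟩ := (hMW σ hσ g hg x).2
      have : lowerExt A σ g x = i := hi.csInf_eq (hA.image _)
      rw [this]; exact hi
    constructor
    · rintro _ ⟨x, rfl⟩
      refine le_of_forall_lt fun c hc => ?_
      have : m ≤ lowerExt A σ g x := by
        apply le_csInf (hA.image _)
        rintro _ ⟨a, ha, rfl⟩
        have h1 : m ≤ g a := hm.1 ⟨a, ha, rfl⟩
        show m ≤ g a + σ * dist x a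
        nlinarith [dist_nonneg (x := x) (y := a)]
      linarith [this]
    · intro b hb
      apply hm.2
      rintro _ ⟨a, ha, rfl⟩
      have h1 : b ≤ lowerExt A σ g a := hb ⟨a, rfl⟩
      have h2 : lowerExt A σ g a ≤ g a := by
        have hmem : g a ∈ (fun b => g b + σ * dist a b) '' A := ⟨a, ha, by simp⟩
        exact (key a).1 hmem
      linarith
  · intro M hM
    have hA : A.Nonempty := by
      by_contra h
      rw [Set.not_nonempty_iff_eq_empty] at h
      subst h
      simp only [Set.image_empty] at hM
      have h1 : M ≤ M - 1 := hM.2 (fun y hy => absurd hy (Set.notMem_empty y))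
      linarith
    have key : ∀ x : X, IsLUB ((fun a => g a - σ * dist x a) '' A) (upperExt A σ g x) := by
      intro x
      obtain ⟨s, hs⟩ := (hMW σ hσ g hg x).1
      have : upperExt A σ g x = s := hs.csSup_eq (hA.image _)
      rw [this]; exact hs
    constructor
    · rintro _ ⟨x, rfl⟩
      apply csSup_le (hA.image _)
      rintro _ ⟨a, ha, rfl⟩
      have h1 : g a ≤ M := hM.1 ⟨a, ha, rfl⟩
      show g a - σ * dist x a ≤ M
      nlinarith [dist_nonneg (x := x) (y := a)]
    · intro b hb
      apply hM.2
      rintro _ ⟨a, ha, rfl⟩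
      have h1 : upperExt A σ g a ≤ b := hb ⟨a, rfl⟩
      have h2 : g a ≤ upperExt A σ g a := by
        have hmem : g a ∈ (fun b => g b - σ * dist a b) '' A := ⟨a, ha, by simp⟩
        exact (key a).1 hmem
      linarith
end

section
/- Let (X,A) be a McShane-Whitney pair and g ∈ Lip(A) such that the Lipschitz constant L(g) = sup M₀(g) exists. Then for any L(g)-Lipschitz extension f : X → ℝ of g, L(f) exists and L(f) = L(g). In particular L(g*) and L(*g) exist and L(g*) = L(g) = L(*g). -/
theorem stmt_13 {X : Type*} [MetricSpace X] (A : Set X) (hMW : MWPair A)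
    (g : X → ℝ)
    (hlip : ∃ σ : ℝ, 0 ≤ σ ∧ ∀ a ∈ A, ∀ b ∈ A, |g a - g b| ≤ σ * dist a b)
    (L : ℝ)
    (hub : L ∈ upperBounds
      {r : ℝ | ∃ a ∈ A, ∃ b ∈ A, 0 < dist a b ∧ r = |g a - g b| / dist a b})
    (happrox : ∀ ε : ℝ, 0 < ε →
      ∃ r ∈ {r : ℝ | ∃ a ∈ A, ∃ b ∈ A, 0 < dist a b ∧ r = |g a - g b| / dist a b},
        L - ε < r) :
    (∀ f : X → ℝ, (∀ a ∈ A, f a = g a) → (∀ x y : X, |f x - f y| ≤ L * dist x y) →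
      L ∈ upperBounds {r : ℝ | ∃ x y : X, 0 < dist x y ∧ r = |f x - f y| / dist x y} ∧
      ∀ ε : ℝ, 0 < ε →
        ∃ r ∈ {r : ℝ | ∃ x y : X, 0 < dist x y ∧ r = |f x - f y| / dist x y}, L - ε < r) ∧
    (L ∈ upperBounds {r : ℝ | ∃ x y : X, 0 < dist x y ∧
        r = |upperExt A L g x - upperExt A L g y| / dist x y} ∧
      ∀ ε : ℝ, 0 < ε → ∃ r ∈ {r : ℝ | ∃ x y : X, 0 < dist x y ∧
        r = |upperExt A L g x - upperExt A L g y| / dist x y}, L - ε < r) ∧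
    (L ∈ upperBounds {r : ℝ | ∃ x y : X, 0 < dist x y ∧
        r = |lowerExt A L g x - lowerExt A L g y| / dist x y} ∧
      ∀ ε : ℝ, 0 < ε → ∃ r ∈ {r : ℝ | ∃ x y : X, 0 < dist x y ∧
        r = |lowerExt A L g x - lowerExt A L g y| / dist x y}, L - ε < r) := by
  clear hlip
  -- g is L-Lipschitz on A
  have hg : ∀ a ∈ A, ∀ b ∈ A, |g a - g b| ≤ L * dist a b := by
    intro a ha b hb
    rcases eq_or_lt_of_le (dist_nonneg (x := a) (y := b)) with h | h
    · have : a = b := eq_of_dist_eq_zero h.symm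
      simp [this]
    · have : |g a - g b| / dist a b ≤ L := hub ⟨a, ha, b, hb, h, rfl⟩
      calc |g a - g b| = |g a - g b| / dist a b * dist a b := by
            field_simp
        _ ≤ L * dist a b := by
            exact mul_le_mul_of_nonneg_right this h.le
  -- A is nonempty and L ≥ 0
  obtain ⟨r₀, ⟨a₀, ha₀, b₀, hb₀, hd₀, hr₀⟩, -⟩ := happrox 1 one_pos
  have hA : A.Nonempty := ⟨a₀, ha₀⟩
  have hL0 : 0 ≤ L := by
    have h1 : r₀ ≤ L := hub ⟨a₀, ha₀, b₀, hb₀, hd₀, hr₀⟩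
    have h2 : 0 ≤ r₀ := hr₀ ▸ div_nonneg (abs_nonneg _) hd₀.le
    linarith
  -- main claim for arbitrary extensions
  have main : ∀ f : X → ℝ, (∀ a ∈ A, f a = g a) →
      (∀ x y : X, |f x - f y| ≤ L * dist x y) →
      L ∈ upperBounds {r : ℝ | ∃ x y : X, 0 < dist x y ∧ r = |f x - f y| / dist x y} ∧
      ∀ ε : ℝ, 0 < ε →
        ∃ r ∈ {r : ℝ | ∃ x y : X, 0 < dist x y ∧ r = |f x - f y| / dist x y},
          L - ε < r := by
    intro f hext hlipf
    constructor
    · rintro r ⟨x, y, hd, rfl⟩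
      rw [div_le_iff₀ hd]
      exact hlipf x y
    · intro ε hε
      obtain ⟨r, ⟨a, ha, b, hb, hd, hr⟩, hlt⟩ := happrox ε hε
      refine ⟨r, ⟨a, b, hd, ?_⟩, hlt⟩
      rw [hr, hext a ha, hext b hb]
  -- IsLUB / IsGLB facts
  have hlub : ∀ x : X, IsLUB ((fun a => g a - L * dist x a) '' A) (upperExt A L g x) := by
    intro x
    rcases hL0.lt_or_eq with hL | hL
    · obtain ⟨s, hs⟩ := (hMW L hL g hg x).1
      have : upperExt A L g x = s := hs.csSup_eq (hA.image _)
      rwa [this]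
    · subst hL
      have himg : (fun a => g a - (0:ℝ) * dist x a) '' A = {g a₀} := by
        apply Set.eq_singleton_iff_nonempty_unique_mem.2
        refine ⟨(hA.image _), ?_⟩
        rintro y ⟨a, ha, rfl⟩
        have := hg a ha a₀ ha₀
        simp only [zero_mul] at this ⊢
        have : g a = g a₀ := by
          rw [← sub_eq_zero]; exact abs_eq_zero.1 (le_antisymm this (abs_nonneg _))
        simpa using this
      rw [upperExt, himg, csSup_singleton]
      exact isLUB_singleton
  have hglb : ∀ x : X, IsGLB ((fun a => g a + L * dist x a) '' A) (lowerExt A L g x) := by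
    intro x
    rcases hL0.lt_or_eq with hL | hL
    · obtain ⟨s, hs⟩ := (hMW L hL g hg x).2
      have : lowerExt A L g x = s := hs.csInf_eq (hA.image _)
      rwa [this]
    · subst hL
      have himg : (fun a => g a + (0:ℝ) * dist x a) '' A = {g a₀} := by
        apply Set.eq_singleton_iff_nonempty_unique_mem.2
        refine ⟨(hA.image _), ?_⟩
        rintro y ⟨a, ha, rfl⟩
        have := hg a ha a₀ ha₀
        simp only [zero_mul] at this ⊢
        have : g a = g a₀ := by
          rw [← sub_eq_zero]; exact abs_eq_zero.1 (le_antisymm this (abs_nonneg _))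
        simpa using this
      rw [lowerExt, himg, csInf_singleton]
      exact isGLB_singleton
  -- upperExt extends g
  have hUext : ∀ a ∈ A, upperExt A L g a = g a := by
    intro a ha
    refine (hlub a).unique ?_
    constructor
    · rintro y ⟨b, hb, rfl⟩
      have := hg b hb a ha
      have h1 : g b - g a ≤ L * dist b a := (abs_le.1 this).2
      show g b - L * dist a b ≤ g a
      rw [dist_comm a b]
      linarith
    · intro u hu
      have : g a - L * dist a a ∈ (fun b => g b - L * dist a b) '' A := ⟨a, ha, rfl⟩
      have := hu this
      simpa using this
  have hLext : ∀ a ∈ A, lowerExt A L g a = g a := by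
    intro a ha
    refine (hglb a).unique ?_
    constructor
    · rintro y ⟨b, hb, rfl⟩
      have := hg a ha b hb
      have h1 : g a - g b ≤ L * dist a b := (abs_le.1 this).2
      show g a ≤ g b + L * dist a b
      linarith
    · intro u hu
      have : g a + L * dist a a ∈ (fun b => g b + L * dist a b) '' A := ⟨a, ha, rfl⟩
      have := hu this
      simpa using this
  -- Lipschitz bounds for the extensions
  have hUle : ∀ x y : X, upperExt A L g x ≤ upperExt A L g y + L * dist x y := by
    intro x y
    refine (hlub x).2 ?_
    rintro z ⟨a, ha, rfl⟩
    have h1 : g a - L * dist y a ≤ upperExt A L g y := (hlub y).1 ⟨a, ha, rfl⟩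
    have h2 : dist y a ≤ dist y x + dist x a := dist_triangle y x a
    have h3 : L * dist y a ≤ L * (dist y x + dist x a) :=
      mul_le_mul_of_nonneg_left h2 hL0
    show g a - L * dist x a ≤ upperExt A L g y + L * dist x y
    rw [dist_comm x y]
    nlinarith
  have hUlip : ∀ x y : X, |upperExt A L g x - upperExt A L g y| ≤ L * dist x y := by
    intro x y
    rw [abs_le]
    constructor
    · have := hUle y x
      rw [dist_comm y x] at this
      linarith
    · have := hUle x y
      linarith
  have hLle : ∀ x y : X, lowerExt A L g x ≤ lowerExt A L g y + L * dist x y := by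
    intro x y
    have hlb : lowerExt A L g x - L * dist x y ∈
        lowerBounds ((fun a => g a + L * dist y a) '' A) := by
      rintro z ⟨a, ha, rfl⟩
      have h1 : lowerExt A L g x ≤ g a + L * dist x a := (hglb x).1 ⟨a, ha, rfl⟩
      have h2 : dist x a ≤ dist x y + dist y a := dist_triangle x y a
      have h3 : L * dist x a ≤ L * (dist x y + dist y a) :=
        mul_le_mul_of_nonneg_left h2 hL0
      show lowerExt A L g x - L * dist x y ≤ g a + L * dist y a
      nlinarith
    have := (hglb y).2 hlb
    linarith
  have hLlip : ∀ x y : X, |lowerExt A L g x - lowerExt A L g y| ≤ L * dist x y := by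
    intro x y
    rw [abs_le]
    constructor
    · have := hLle y x
      rw [dist_comm y x] at this
      linarith
    · have := hLle x y
      linarith
  exact ⟨main, main _ hUext hUlip, main _ hLext hLlip⟩
end

section
/- Let ν be a modulus of continuity, (X,A) a ν-McShane-Whitney pair, and g : A → ℝ ν-continuous (|g(a)-g(b)| ≤ ν(d(a,b)) for all a,b ∈ A). Then g*_ν(x) := sup{g(a) - ν(d(x,a)) : a ∈ A} and *g_ν(x) := inf{g(a) + ν(d(x,a)) : a ∈ A} are ν-continuous functions on X extending g, and every ν-continuous extension f of g satisfies g*_ν ≤ f ≤ *g_ν. -/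
theorem stmt_16 {X : Type*} [MetricSpace X] (A : Set X)
    (ν : ℝ → ℝ)
    (hν0 : ν 0 = 0)
    (hsub : ∀ s t : ℝ, 0 ≤ s → 0 ≤ t → ν (s + t) ≤ ν s + ν t)
    (hmono : ∀ s t : ℝ, 0 ≤ s → s < t → ν s < ν t)
    (huc : ∀ b : ℝ, 0 < b → ∀ ε : ℝ, 0 < ε → ∃ δ : ℝ, 0 < δ ∧
      ∀ s t : ℝ, 0 ≤ s → s ≤ b → 0 ≤ t → t ≤ b → |s - t| ≤ δ → |ν s - ν t| ≤ ε)
    (hMW : ∀ h : X → ℝ, (∀ a ∈ A, ∀ b ∈ A, |h a - h b| ≤ ν (dist a b)) →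
      ∀ x : X, (∃ s, IsLUB ((fun a => h a - ν (dist x a)) '' A) s) ∧
               (∃ i, IsGLB ((fun a => h a + ν (dist x a)) '' A) i))
    (g : X → ℝ)
    (hg : ∀ a ∈ A, ∀ b ∈ A, |g a - g b| ≤ ν (dist a b)) :
    (∀ x y : X, |sSup ((fun a => g a - ν (dist x a)) '' A) -
        sSup ((fun a => g a - ν (dist y a)) '' A)| ≤ ν (dist x y)) ∧
    (∀ x y : X, |sInf ((fun a => g a + ν (dist x a)) '' A) -
        sInf ((fun a => g a + ν (dist y a)) '' A)| ≤ ν (dist x y)) ∧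
    (∀ a ∈ A, sSup ((fun b => g b - ν (dist a b)) '' A) = g a) ∧
    (∀ a ∈ A, sInf ((fun b => g b + ν (dist a b)) '' A) = g a) ∧
    (∀ f : X → ℝ, (∀ x y : X, |f x - f y| ≤ ν (dist x y)) → (∀ a ∈ A, f a = g a) →
      ∀ x : X, sSup ((fun a => g a - ν (dist x a)) '' A) ≤ f x ∧
        f x ≤ sInf ((fun a => g a + ν (dist x a)) '' A)) := by
  -- monotonicity (non-strict) of ν on [0,∞)
  have hmono' : ∀ s t : ℝ, 0 ≤ s → s ≤ t → ν s ≤ ν t := by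
    intro s t hs hst
    rcases eq_or_lt_of_le hst with h | h
    · rw [h]
    · exact (hmono s t hs h).le
  -- key triangle-type estimate
  have key : ∀ x y a : X, ν (dist x a) ≤ ν (dist y a) + ν (dist x y) := by
    intro x y a
    calc ν (dist x a) ≤ ν (dist y a + dist x y) := by
          apply hmono' _ _ dist_nonneg
          rw [add_comm]; exact dist_triangle x y a
      _ ≤ ν (dist y a) + ν (dist x y) := hsub _ _ dist_nonneg dist_nonneg
  have hAne : ∀ x : X, A.Nonempty := by
    intro x
    obtain ⟨s, hs⟩ := (hMW g hg x).1
    have := hs.nonempty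
    exact this.of_image
  -- the sup is the LUB value
  have hsup : ∀ x : X, IsLUB ((fun a => g a - ν (dist x a)) '' A)
      (sSup ((fun a => g a - ν (dist x a)) '' A)) := by
    intro x
    obtain ⟨s, hs⟩ := (hMW g hg x).1
    rwa [hs.csSup_eq ((hAne x).image _)]
  have hinf : ∀ x : X, IsGLB ((fun a => g a + ν (dist x a)) '' A)
      (sInf ((fun a => g a + ν (dist x a)) '' A)) := by
    intro x
    obtain ⟨s, hs⟩ := (hMW g hg x).2
    rwa [hs.csInf_eq ((hAne x).image _)]
  have hsup_le : ∀ x y : X, sSup ((fun a => g a - ν (dist x a)) '' A) ≤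
      sSup ((fun a => g a - ν (dist y a)) '' A) + ν (dist x y) := by
    intro x y
    apply (hsup x).2
    rintro _ ⟨a, ha, rfl⟩
    dsimp only
    have h1 : g a - ν (dist y a) ≤ sSup ((fun a => g a - ν (dist y a)) '' A) :=
      (hsup y).1 ⟨a, ha, rfl⟩
    have h2 := key y x a
    rw [dist_comm y x] at h2
    linarith
  have hinf_le : ∀ x y : X, sInf ((fun a => g a + ν (dist y a)) '' A) - ν (dist x y) ≤
      sInf ((fun a => g a + ν (dist x a)) '' A) := by
    intro x y
    apply (hinf x).2
    rintro _ ⟨a, ha, rfl⟩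
    dsimp only
    have h1 : sInf ((fun a => g a + ν (dist y a)) '' A) ≤ g a + ν (dist y a) :=
      (hinf y).1 ⟨a, ha, rfl⟩
    have h2 := key y x a
    rw [dist_comm y x] at h2
    linarith
  have hνsymm : ∀ x y : X, ν (dist x y) = ν (dist y x) := by
    intro x y; rw [dist_comm]
  refine ⟨?_, ?_, ?_, ?_, ?_⟩
  · intro x y
    rw [abs_sub_le_iff]
    constructor
    · have := hsup_le x y; linarith
    · have := hsup_le y x; rw [hνsymm y x] at this; linarith
  · intro x y
    rw [abs_sub_le_iff]
    constructor
    · have := hinf_le y x; rw [hνsymm y x] at this; linarith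
    · have := hinf_le x y; linarith
  · intro a ha
    apply le_antisymm
    · apply (hsup a).2
      rintro _ ⟨b, hb, rfl⟩
      dsimp only
      have := hg b hb a ha
      rw [abs_sub_le_iff] at this
      rw [dist_comm] at this
      linarith [this.1]
    · have : g a - ν (dist a a) ∈ (fun b => g b - ν (dist a b)) '' A := ⟨a, ha, rfl⟩
      have h2 := (hsup a).1 this
      simp [hν0] at h2
      linarith
  · intro a ha
    apply le_antisymm
    · have : g a + ν (dist a a) ∈ (fun b => g b + ν (dist a b)) '' A := ⟨a, ha, rfl⟩
      have h2 := (hinf a).1 this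
      simp [hν0] at h2
      linarith
    · apply (hinf a).2
      rintro _ ⟨b, hb, rfl⟩
      dsimp only
      have := hg b hb a ha
      rw [abs_sub_le_iff] at this
      rw [dist_comm] at this
      linarith [this.2]
  · intro f hf hfa x
    constructor
    · apply (hsup x).2
      rintro _ ⟨a, ha, rfl⟩
      dsimp only
      have := hf x a
      rw [abs_sub_le_iff] at this
      rw [hfa a ha] at this
      linarith [this.2]
    · apply (hinf x).2
      rintro _ ⟨a, ha, rfl⟩
      dsimp only
      have := hf x a
      rw [abs_sub_le_iff] at this
      rw [hfa a ha] at this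
      linarith [this.1]
end

section
/- Let X be a normed space, C ⊆ X convex, (X,C) a McShane-Whitney pair, and g ∈ Lip(C,σ). If g is convex on C, then *g(x) := inf{g(c) + σ‖x - c‖ : c ∈ C} is convex on X; if g is concave, then g*(x) := sup{g(c) - σ‖x - c‖ : c ∈ C} is concave on X. -/
theorem stmt_17 {X : Type*} [NormedAddCommGroup X] [NormedSpace ℝ X]
    (C : Set X) (hC : Convex ℝ C) (hMW : MWPair C)
    (σ : ℝ) (hσ : 0 < σ) (g : X → ℝ)
    (hg : ∀ a ∈ C, ∀ b ∈ C, |g a - g b| ≤ σ * ‖a - b‖) :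
    (ConvexOn ℝ C g →
      ConvexOn ℝ Set.univ (fun x => sInf ((fun c => g c + σ * ‖x - c‖) '' C))) ∧
    (ConcaveOn ℝ C g →
      ConcaveOn ℝ Set.univ (fun x => sSup ((fun c => g c - σ * ‖x - c‖) '' C))) := by
  have hg' : ∀ a ∈ C, ∀ b ∈ C, |g a - g b| ≤ σ * dist a b := by
    simpa [dist_eq_norm] using hg
  have hMW' := hMW σ hσ g hg'
  -- C is nonempty
  have hCne : C.Nonempty := by
    by_contra h
    rw [Set.not_nonempty_iff_eq_empty] at h
    obtain ⟨⟨s, hs⟩, -⟩ := hMW' 0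
    rw [h, Set.image_empty] at hs
    have h1 : s ≤ s - 1 := hs.2 (by intro y hy; exact absurd hy (Set.notMem_empty y))
    linarith
  -- rewrite images to use dist
  have himgI : ∀ x : X, ((fun c => g c + σ * ‖x - c‖) '' C) =
      ((fun a => g a + σ * dist x a) '' C) := by
    intro x; simp [dist_eq_norm]
  have himgS : ∀ x : X, ((fun c => g c - σ * ‖x - c‖) '' C) =
      ((fun a => g a - σ * dist x a) '' C) := by
    intro x; simp [dist_eq_norm]
  have hbddB : ∀ x : X, BddBelow ((fun c => g c + σ * ‖x - c‖) '' C) := by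
    intro x
    obtain ⟨-, ⟨i, hi⟩⟩ := hMW' x
    exact ⟨i, by rw [himgI x]; exact hi.1⟩
  have hbddA : ∀ x : X, BddAbove ((fun c => g c - σ * ‖x - c‖) '' C) := by
    intro x
    obtain ⟨⟨s, hs⟩, -⟩ := hMW' x
    exact ⟨s, by rw [himgS x]; exact hs.1⟩
  constructor
  · -- convex case
    intro hgc
    refine ⟨convex_univ, ?_⟩
    intro x _ y _ a b ha hb hab
    set f : X → ℝ := fun x => sInf ((fun c => g c + σ * ‖x - c‖) '' C) with hf
    show f (a • x + b • y) ≤ a * f x + b * f y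
    refine le_of_forall_pos_le_add ?_
    intro ε hε
    -- pick near-optimal points for x and y
    obtain ⟨u, hu, hult⟩ := Real.lt_sInf_add_pos (hCne.image _) hε (s := (fun c => g c + σ * ‖x - c‖) '' C)
    obtain ⟨p, hpC, hpu⟩ := hu
    obtain ⟨v, hv, hvlt⟩ := Real.lt_sInf_add_pos (hCne.image _) hε (s := (fun c => g c + σ * ‖y - c‖) '' C)
    obtain ⟨q, hqC, hqv⟩ := hv
    have heC : a • p + b • q ∈ C := hC hpC hqC ha hb hab
    have hmem : g (a • p + b • q) + σ * ‖(a • x + b • y) - (a • p + b • q)‖ ∈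
        (fun c => g c + σ * ‖(a • x + b • y) - c‖) '' C := ⟨_, heC, rfl⟩
    have h1 : f (a • x + b • y) ≤ g (a • p + b • q) + σ * ‖(a • x + b • y) - (a • p + b • q)‖ :=
      csInf_le (hbddB _) hmem
    have hgle : g (a • p + b • q) ≤ a * g p + b * g q := hgc.2 hpC hqC ha hb hab
    have hnorm : ‖(a • x + b • y) - (a • p + b • q)‖ ≤ a * ‖x - p‖ + b * ‖y - q‖ := by
      have heq : (a • x + b • y) - (a • p + b • q) = a • (x - p) + b • (y - q) := by
        module
      rw [heq]
      calc ‖a • (x - p) + b • (y - q)‖ ≤ ‖a • (x - p)‖ + ‖b • (y - q)‖ := norm_add_le _ _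
        _ = a * ‖x - p‖ + b * ‖y - q‖ := by
            rw [norm_smul, norm_smul, Real.norm_of_nonneg ha, Real.norm_of_nonneg hb]
    have h2 : g (a • p + b • q) + σ * ‖(a • x + b • y) - (a • p + b • q)‖ ≤
        a * (g p + σ * ‖x - p‖) + b * (g q + σ * ‖y - q‖) := by
      nlinarith [mul_le_mul_of_nonneg_left hnorm hσ.le]
    have h3 : a * (g p + σ * ‖x - p‖) ≤ a * (f x + ε) := by
      apply mul_le_mul_of_nonneg_left _ ha
      rw [← hpu] at hult; exact hult.le
    have h4 : b * (g q + σ * ‖y - q‖) ≤ b * (f y + ε) := by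
      apply mul_le_mul_of_nonneg_left _ hb
      rw [← hqv] at hvlt; exact hvlt.le
    nlinarith
  · -- concave case
    intro hgc
    refine ⟨convex_univ, ?_⟩
    intro x _ y _ a b ha hb hab
    set f : X → ℝ := fun x => sSup ((fun c => g c - σ * ‖x - c‖) '' C) with hf
    show a * f x + b * f y ≤ f (a • x + b • y)
    refine le_of_forall_pos_le_add ?_
    intro ε hε
    obtain ⟨u, hu, hult⟩ := Real.add_neg_lt_sSup (hCne.image (fun c => g c - σ * ‖x - c‖))
      (ε := -ε) (by linarith)
    obtain ⟨p, hpC, hpu⟩ := hu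
    obtain ⟨v, hv, hvlt⟩ := Real.add_neg_lt_sSup (hCne.image (fun c => g c - σ * ‖y - c‖))
      (ε := -ε) (by linarith)
    obtain ⟨q, hqC, hqv⟩ := hv
    have heC : a • p + b • q ∈ C := hC hpC hqC ha hb hab
    have hmem : g (a • p + b • q) - σ * ‖(a • x + b • y) - (a • p + b • q)‖ ∈
        (fun c => g c - σ * ‖(a • x + b • y) - c‖) '' C := ⟨_, heC, rfl⟩
    have h1 : g (a • p + b • q) - σ * ‖(a • x + b • y) - (a • p + b • q)‖ ≤ f (a • x + b • y) :=
      le_csSup (hbddA _) hmem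
    have hgle : a * g p + b * g q ≤ g (a • p + b • q) := hgc.2 hpC hqC ha hb hab
    have hnorm : ‖(a • x + b • y) - (a • p + b • q)‖ ≤ a * ‖x - p‖ + b * ‖y - q‖ := by
      have heq : (a • x + b • y) - (a • p + b • q) = a • (x - p) + b • (y - q) := by
        module
      rw [heq]
      calc ‖a • (x - p) + b • (y - q)‖ ≤ ‖a • (x - p)‖ + ‖b • (y - q)‖ := norm_add_le _ _
        _ = a * ‖x - p‖ + b * ‖y - q‖ := by
            rw [norm_smul, norm_smul, Real.norm_of_nonneg ha, Real.norm_of_nonneg hb]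
    have h2 : a * (g p - σ * ‖x - p‖) + b * (g q - σ * ‖y - q‖) ≤
        g (a • p + b • q) - σ * ‖(a • x + b • y) - (a • p + b • q)‖ := by
      nlinarith [mul_le_mul_of_nonneg_left hnorm hσ.le]
    have h3 : a * (f x - ε) ≤ a * (g p - σ * ‖x - p‖) := by
      apply mul_le_mul_of_nonneg_left _ ha
      rw [← hpu] at hult; simp only at hult; linarith
    have h4 : b * (f y - ε) ≤ b * (g q - σ * ‖y - q‖) := by
      apply mul_le_mul_of_nonneg_left _ hb
      rw [← hqv] at hvlt; simp only at hvlt; linarith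
    nlinarith
end

section
/- Let X be a normed space, A a nontrivial linear subspace of X with (X,A) a McShane-Whitney pair, and g ∈ Lip(A,σ) linear. Then *g(x) := inf{g(a)+σ‖x-a‖ : a ∈ A} is sublinear: *g(x₁+x₂) ≤ *g(x₁) + *g(x₂) for all x₁, x₂ ∈ X, and *g(λx) = λ·*g(x) for λ > 0; while for λ < 0, *g(λx) = λ·g*(x) where g*(x) := sup{g(a)-σ‖x-a‖ : a ∈ A}. Dually, g* is superlinear. -/
open Pointwise


theorem stmt_18 {X : Type*} [NormedAddCommGroup X] [NormedSpace ℝ X]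
    (A : Submodule ℝ X) (hA : ∃ a ∈ A, a ≠ 0)
    (hMW : MWPair (A : Set X))
    (σ : ℝ) (hσ : 0 < σ) (g : X → ℝ)
    (hg : ∀ a ∈ A, ∀ b ∈ A, |g a - g b| ≤ σ * ‖a - b‖)
    (hadd : ∀ a ∈ A, ∀ b ∈ A, g (a + b) = g a + g b)
    (hsmul : ∀ a ∈ A, ∀ l : ℝ, g (l • a) = l * g a) :
    (∀ x₁ x₂ : X,
      sInf ((fun a => g a + σ * ‖x₁ + x₂ - a‖) '' (A : Set X)) ≤
        sInf ((fun a => g a + σ * ‖x₁ - a‖) '' (A : Set X)) +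
        sInf ((fun a => g a + σ * ‖x₂ - a‖) '' (A : Set X))) ∧
    (∀ x₁ x₂ : X,
      sSup ((fun a => g a - σ * ‖x₁ - a‖) '' (A : Set X)) +
        sSup ((fun a => g a - σ * ‖x₂ - a‖) '' (A : Set X)) ≤
        sSup ((fun a => g a - σ * ‖x₁ + x₂ - a‖) '' (A : Set X))) ∧
    (∀ l : ℝ, 0 < l → ∀ x : X,
      sInf ((fun a => g a + σ * ‖l • x - a‖) '' (A : Set X)) =
        l * sInf ((fun a => g a + σ * ‖x - a‖) '' (A : Set X)) ∧
      sSup ((fun a => g a - σ * ‖l • x - a‖) '' (A : Set X)) =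
        l * sSup ((fun a => g a - σ * ‖x - a‖) '' (A : Set X))) ∧
    (∀ l : ℝ, l < 0 → ∀ x : X,
      sInf ((fun a => g a + σ * ‖l • x - a‖) '' (A : Set X)) =
        l * sSup ((fun a => g a - σ * ‖x - a‖) '' (A : Set X)) ∧
      sSup ((fun a => g a - σ * ‖l • x - a‖) '' (A : Set X)) =
        l * sInf ((fun a => g a + σ * ‖x - a‖) '' (A : Set X))) := by
  obtain ⟨a0, ha0, -⟩ := hA
  have hg' : ∀ a ∈ (A : Set X), ∀ b ∈ (A : Set X), |g a - g b| ≤ σ * dist a b := by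
    intro a ha b hb; rw [dist_eq_norm]; exact hg a ha b hb
  have hbb : ∀ x : X, BddBelow ((fun a => g a + σ * ‖x - a‖) '' (A : Set X)) := by
    intro x
    obtain ⟨-, i, hi⟩ := hMW σ hσ g hg' x
    exact ⟨i, by simpa [dist_eq_norm] using hi.1⟩
  have hba : ∀ x : X, BddAbove ((fun a => g a - σ * ‖x - a‖) '' (A : Set X)) := by
    intro x
    obtain ⟨⟨s, hs⟩, -⟩ := hMW σ hσ g hg' x
    exact ⟨s, by simpa [dist_eq_norm] using hs.1⟩
  have hne : ∀ f : X → ℝ, (f '' (A : Set X)).Nonempty := fun f => ⟨f a0, a0, ha0, rfl⟩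
  -- image equality under scaling
  have himg : ∀ (l : ℝ), l ≠ 0 → ∀ (F G : X → ℝ),
      (∀ b ∈ (A : Set X), F (l • b) = l * G b) →
      F '' (A : Set X) = l • (G '' (A : Set X)) := by
    intro l hl F G h
    ext y
    constructor
    · rintro ⟨a, ha, rfl⟩
      refine ⟨G (l⁻¹ • a), ⟨l⁻¹ • a, A.smul_mem _ ha, rfl⟩, ?_⟩
      have := h (l⁻¹ • a) (A.smul_mem _ ha)
      rw [smul_smul, mul_inv_cancel₀ hl, one_smul] at this
      simpa [smul_eq_mul] using this.symm
    · rintro ⟨z, ⟨b, hb, rfl⟩, rfl⟩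
      exact ⟨l • b, A.smul_mem _ hb, by simp only [smul_eq_mul, h b hb]⟩
  refine ⟨?_, ?_, ?_, ?_⟩
  · -- subadditivity of inf
    intro x₁ x₂
    rw [← sub_le_iff_le_add']
    apply le_csInf (hne _)
    rintro v ⟨b, hb, rfl⟩
    dsimp only
    rw [sub_le_iff_le_add, ← sub_le_iff_le_add']
    apply le_csInf (hne _)
    rintro u ⟨a, ha, rfl⟩
    dsimp only
    rw [sub_le_iff_le_add]
    have hel : g (a + b) + σ * ‖x₁ + x₂ - (a + b)‖ ∈
        (fun a => g a + σ * ‖x₁ + x₂ - a‖) '' (A : Set X) :=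
      ⟨a + b, A.add_mem ha hb, rfl⟩
    have h1 := csInf_le (hbb (x₁ + x₂)) hel
    have h2 : ‖x₁ + x₂ - (a + b)‖ ≤ ‖x₁ - a‖ + ‖x₂ - b‖ := by
      have : x₁ + x₂ - (a + b) = (x₁ - a) + (x₂ - b) := by abel
      rw [this]; exact norm_add_le _ _
    have h3 := mul_le_mul_of_nonneg_left h2 hσ.le
    rw [hadd a ha b hb] at h1
    linarith
  · -- superadditivity of sup
    intro x₁ x₂
    rw [← le_sub_iff_add_le]
    apply csSup_le (hne _)
    rintro u ⟨a, ha, rfl⟩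
    dsimp only
    rw [le_sub_iff_add_le, add_comm (g a - σ * ‖x₁ - a‖), ← le_sub_iff_add_le]
    apply csSup_le (hne _)
    rintro v ⟨b, hb, rfl⟩
    dsimp only
    rw [le_sub_iff_add_le]
    have hel : g (a + b) - σ * ‖x₁ + x₂ - (a + b)‖ ∈
        (fun a => g a - σ * ‖x₁ + x₂ - a‖) '' (A : Set X) :=
      ⟨a + b, A.add_mem ha hb, rfl⟩
    have h1 := le_csSup (hba (x₁ + x₂)) hel
    have h2 : ‖x₁ + x₂ - (a + b)‖ ≤ ‖x₁ - a‖ + ‖x₂ - b‖ := by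
      have : x₁ + x₂ - (a + b) = (x₁ - a) + (x₂ - b) := by abel
      rw [this]; exact norm_add_le _ _
    have h3 := mul_le_mul_of_nonneg_left h2 hσ.le
    rw [hadd a ha b hb] at h1
    linarith
  · -- positive scaling
    intro l hl x
    have key : ∀ b ∈ (A : Set X),
        (g (l • b) = l * g b ∧ ‖l • x - l • b‖ = l * ‖x - b‖) := by
      intro b hb
      refine ⟨hsmul b hb l, ?_⟩
      rw [← smul_sub, norm_smul, Real.norm_eq_abs, abs_of_pos hl]
    constructor
    · rw [himg l hl.ne' (fun a => g a + σ * ‖l • x - a‖) (fun b => g b + σ * ‖x - b‖) (fun b hb => by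
        obtain ⟨h1, h2⟩ := key b hb; simp only [h1, h2]; ring),
        Real.sInf_smul_of_nonneg hl.le, smul_eq_mul]
    · rw [himg l hl.ne' (fun a => g a - σ * ‖l • x - a‖) (fun b => g b - σ * ‖x - b‖) (fun b hb => by
        obtain ⟨h1, h2⟩ := key b hb; simp only [h1, h2]; ring),
        Real.sSup_smul_of_nonneg hl.le, smul_eq_mul]
  · -- negative scaling
    intro l hl x
    have key : ∀ b ∈ (A : Set X),
        (g (l • b) = l * g b ∧ ‖l • x - l • b‖ = -l * ‖x - b‖) := by
      intro b hb
      refine ⟨hsmul b hb l, ?_⟩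
      rw [← smul_sub, norm_smul, Real.norm_eq_abs, abs_of_neg hl]
    constructor
    · rw [himg l hl.ne (fun a => g a + σ * ‖l • x - a‖) (fun b => g b - σ * ‖x - b‖) (fun b hb => by
        obtain ⟨h1, h2⟩ := key b hb; simp only [h1, h2]; ring),
        Real.sInf_smul_of_nonpos hl.le, smul_eq_mul]
    · rw [himg l hl.ne (fun a => g a - σ * ‖l • x - a‖) (fun b => g b + σ * ‖x - b‖) (fun b hb => by
        obtain ⟨h1, h2⟩ := key b hb; simp only [h1, h2]; ring),
        Real.sSup_smul_of_nonpos hl.le, smul_eq_mul]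
end
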